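/- Let F ⊆ P_{a1⊕a2}(X1×X2) be a totally C-cyclically monotone set. Then the set of marginal pairs (pr¹_♯, pr²_♯)(F) ⊆ P_{a1}(X1) × P_{a2}(X2) is C-cyclically monotone, i.e. for all k ≥ 1, all permutations σ of {1,…,k}, and all pairs (μ_{1,i},μ_{2,i}) ∈ (pr¹_♯, pr²_♯)(F), one has Σ_{i=1}^k C(μ_{1,i},μ_{2,σ(i)}) ≥ Σ_{i=1}^k C(μ_{1,i},μ_{2,i}). -/

import Mathlib

open MeasureTheory Topology ENNReal Set

noncomputable section

namespace OTRM

noncomputable instance instMSPM {X : Type*} [MeasurableSpace X] [TopologicalSpace X]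
    [OpensMeasurableSpace X] : MeasurableSpace (ProbabilityMeasure X) := borel _

instance instBSPM {X : Type*} [MeasurableSpace X] [TopologicalSpace X]
    [OpensMeasurableSpace X] : BorelSpace (ProbabilityMeasure X) := ⟨rfl⟩

variable {X1 X2 : Type*}
  [MeasurableSpace X1] [TopologicalSpace X1] [BorelSpace X1] [PolishSpace X1]
  [MeasurableSpace X2] [TopologicalSpace X2] [BorelSpace X2] [PolishSpace X2]

def Coupling {Y1 Y2 : Type*} [MeasurableSpace Y1] [MeasurableSpace Y2]
    (μ1 : ProbabilityMeasure Y1) (μ2 : ProbabilityMeasure Y2) :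
    Set (ProbabilityMeasure (Y1 × Y2)) :=
  {π | (π : Measure (Y1 × Y2)).map Prod.fst = (μ1 : Measure Y1) ∧
       (π : Measure (Y1 × Y2)).map Prod.snd = (μ2 : Measure Y2)}

def transportCost (c : X1 × X2 → ℝ≥0∞) (π : ProbabilityMeasure (X1 × X2)) : ℝ≥0∞ :=
  ∫⁻ p, c p ∂(π : Measure (X1 × X2))

def OTCost (c : X1 × X2 → ℝ≥0∞) (μ1 : ProbabilityMeasure X1) (μ2 : ProbabilityMeasure X2) :
    ℝ≥0∞ :=
  ⨅ π ∈ Coupling μ1 μ2, transportCost c π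

/-- First marginal of a transport plan. -/
def margFst (π : ProbabilityMeasure (X1 × X2)) : ProbabilityMeasure X1 :=
  π.map measurable_fst.aemeasurable

/-- Second marginal of a transport plan. -/
def margSnd (π : ProbabilityMeasure (X1 × X2)) : ProbabilityMeasure X2 :=
  π.map measurable_snd.aemeasurable

/-- The iterated optimal transport cost `𝒞(M1, M2)` between laws of random measures. -/
def IterOTCost (c : X1 × X2 → ℝ≥0∞)
    (M1 : ProbabilityMeasure (ProbabilityMeasure X1))
    (M2 : ProbabilityMeasure (ProbabilityMeasure X2)) : ℝ≥0∞ :=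
  ⨅ P ∈ Coupling M1 M2,
    ∫⁻ p, OTCost c p.1 p.2 ∂(P : Measure (ProbabilityMeasure X1 × ProbabilityMeasure X2))

/-- The set of (laws of) random couplings between `M1` and `M2`. -/
def RandCoupling (M1 : ProbabilityMeasure (ProbabilityMeasure X1))
    (M2 : ProbabilityMeasure (ProbabilityMeasure X2)) :
    Set (ProbabilityMeasure (ProbabilityMeasure (X1 × X2))) :=
  {P | (P : Measure (ProbabilityMeasure (X1 × X2))).map margFst
          = (M1 : Measure (ProbabilityMeasure X1)) ∧
       (P : Measure (ProbabilityMeasure (X1 × X2))).map margSnd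
          = (M2 : Measure (ProbabilityMeasure X2))}

/-- The pair-marginal pushforward `(pr¹_♯, pr²_♯)_♯ P` of a random coupling. -/
def margPairLaw (P : ProbabilityMeasure (ProbabilityMeasure (X1 × X2))) :
    Measure (ProbabilityMeasure X1 × ProbabilityMeasure X2) :=
  (P : Measure (ProbabilityMeasure (X1 × X2))).map fun π => (margFst π, margSnd π)

/-- The set of `c`-optimal couplings (between their own marginals). -/
def OptPlans (c : X1 × X2 → ℝ≥0∞) : Set (ProbabilityMeasure (X1 × X2)) :=
  {π | transportCost c π = OTCost c (margFst π) (margSnd π)}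

/-- Probability measures with finite `a`-moment: `P_a(X)`. -/
def Pa {X : Type*} [MeasurableSpace X] (a : X → ℝ≥0∞) : Set (ProbabilityMeasure X) :=
  {μ | (∫⁻ x, a x ∂(μ : Measure X)) ≠ ⊤}

/-- Plans both of whose marginals have finite moments: `P_{a1 ⊕ a2}(X1 × X2)`. -/
def PaPair (a1 : X1 → ℝ≥0∞) (a2 : X2 → ℝ≥0∞) : Set (ProbabilityMeasure (X1 × X2)) :=
  {π | margFst π ∈ Pa a1 ∧ margSnd π ∈ Pa a2}

section Kframework

variable {Y1 Y2 : Type*}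

/-- `K`-concavity of `φ` relative to the domains `D1`, `D2` (Definition 2.2(2)):
`φ` is not identically `-∞` on `D1` and is, on `D1`, an infimum of functions
`y1 ↦ K(y1,y2) - α` with `y2 ∈ D2`, `α ∈ ℝ`. -/
def KConcaveOn (K : Y1 → Y2 → ℝ≥0∞) (D1 : Set Y1) (D2 : Set Y2) (φ : Y1 → EReal) : Prop :=
  (∃ y1 ∈ D1, φ y1 ≠ ⊥) ∧
    ∃ A : Set (Y2 × ℝ), (∀ p ∈ A, p.1 ∈ D2) ∧
      ∀ y1 ∈ D1, φ y1 = ⨅ p ∈ A, ((K y1 p.1 : EReal) - (p.2 : EReal))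

/-- The `K`-transform of `φ` (Definition 2.2(3)). -/
def KTransform (K : Y1 → Y2 → ℝ≥0∞) (D1 : Set Y1) (φ : Y1 → EReal) : Y2 → EReal :=
  fun y2 => ⨅ y1 ∈ D1, ((K y1 y2 : EReal) - φ y1)

/-- The `K`-superdifferential of `φ` (Definition 2.2(4)). -/
def KSuperdiff (K : Y1 → Y2 → ℝ≥0∞) (D1 : Set Y1) (D2 : Set Y2) (φ : Y1 → EReal) :
    Set (Y1 × Y2) :=
  {p | p.1 ∈ D1 ∧ p.2 ∈ D2 ∧ φ p.1 ≠ ⊥ ∧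
    ∀ y1' ∈ D1, ((K p.1 p.2 : EReal) - φ p.1) ≤ ((K y1' p.2 : EReal) - φ y1')}

/-- `K`-cyclical monotonicity of a set of pairs (Definition 2.2(1)). -/
def KCyclMono (K : Y1 → Y2 → ℝ≥0∞) (G : Set (Y1 × Y2)) : Prop :=
  ∀ (k : ℕ), 1 ≤ k → ∀ f : Fin k → Y1 × Y2, (∀ i, f i ∈ G) →
    ∀ σ : Equiv.Perm (Fin k), (∑ i, K (f i).1 (f i).2) ≤ ∑ i, K (f i).1 (f (σ i)).2

end Kframework

/-- First marginal of a measure on `X1 × X2 × X1`. -/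
def margFirst3 (θ : ProbabilityMeasure (X1 × X2 × X1)) : ProbabilityMeasure X1 :=
  θ.map measurable_fst.aemeasurable

/-- Third marginal of a measure on `X1 × X2 × X1`. -/
def margThird3 (θ : ProbabilityMeasure (X1 × X2 × X1)) : ProbabilityMeasure X1 :=
  θ.map (measurable_snd.comp measurable_snd).aemeasurable

/-- The total `C`-superdifferential of `φ` (Definition 3.4). -/
def TotalSuperdiff (c : X1 × X2 → ℝ≥0∞) (a1 : X1 → ℝ≥0∞) (a2 : X2 → ℝ≥0∞)
    (φ : ProbabilityMeasure X1 → EReal) : Set (ProbabilityMeasure (X1 × X2)) :=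
  {π | π ∈ PaPair a1 a2 ∧
    ∀ θ : ProbabilityMeasure (X1 × X2 × X1),
      (θ : Measure (X1 × X2 × X1)).map (fun p => (p.1, p.2.1)) = (π : Measure (X1 × X2)) →
      margThird3 θ ∈ Pa a1 →
      ((∫⁻ p, c (p.1, p.2.1) ∂(θ : Measure (X1 × X2 × X1)) : ℝ≥0∞) : EReal)
          - ((∫⁻ p, c (p.2.2, p.2.1) ∂(θ : Measure (X1 × X2 × X1)) : ℝ≥0∞) : EReal)
        ≤ φ (margFirst3 θ) - φ (margThird3 θ)}

/-- Total `C`-cyclical monotonicity of a set of plans (Definition 3.5). -/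
def TotallyCCyclMono (c : X1 × X2 → ℝ≥0∞) (F : Set (ProbabilityMeasure (X1 × X2))) : Prop :=
  ∀ (N : ℕ), 1 ≤ N → ∀ θ : ProbabilityMeasure (Fin N → X1 × X2),
    (∀ n : Fin N, θ.map (measurable_pi_apply n).aemeasurable ∈ F) →
    ∀ σ : Equiv.Perm (Fin N),
      (∫⁻ ω, ∑ i, c (ω i) ∂(θ : Measure (Fin N → X1 × X2)))
        ≤ ∫⁻ ω, ∑ i, c ((ω i).1, (ω (σ i)).2) ∂(θ : Measure (Fin N → X1 × X2))

/-!
Fix plans `π i ∈ F` and couplings `β i` of `pr¹_♯ π i` and `pr²_♯ π (σ i)`. For each `i`, glue a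
Markov chain `ω 0, …, ω M` in `X1 × X2` with `ω t ∼ π (σ^t i)` in which
`((ω t).1, (ω (t + 1)).2) ∼ β (σ^t i)`. Total `C`-cyclical monotonicity, applied to the cyclic
shift of this chain, bounds `∑ t ≤ M, cost (π (σ^t i))` by `∑ t < M, cost (β (σ^t i))` plus the
cost of the closing pair `((ω M).1, (ω 0).2)`, which `c ≤ a1 ⊕ a2` bounds independently of `M`.
Summing over `i` gives `(M + 1) ∑ cost π ≤ M ∑ cost β + const`, so `∑ cost π ≤ ∑ cost β` as
`M → ∞`; choosing the `β i` nearly optimal gives the claim.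
-/

open ProbabilityTheory

section MeasureLemmas

variable {A B : Type*} [MeasurableSpace A] [MeasurableSpace B]

lemma map_prodMap_compProd_comap {W : Type*} [MeasurableSpace W] (Q : Measure W) [SFinite Q]
    (κ : Kernel A B) [IsSFiniteKernel κ] {g : W → A} (hg : Measurable g) :
    (Q ⊗ₘ κ.comap g hg).map (Prod.map g id) = Q.map g ⊗ₘ κ := by
  ext s hs
  rw [Measure.map_apply (hg.prodMap measurable_id) hs,
    Measure.compProd_apply (hg.prodMap measurable_id hs), Measure.compProd_apply hs,
    lintegral_map (κ.measurable_kernel_prodMk_left hs) hg]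
  rfl

lemma measurable_snoc {Z : Type*} [MeasurableSpace Z] {n : ℕ} :
    Measurable fun q : (Fin (n + 1) → Z) × Z => (Fin.snoc q.1 q.2 : Fin (n + 2) → Z) := by
  refine measurable_pi_lambda _ fun i => ?_
  induction i using Fin.lastCases with
  | last => simpa only [Fin.snoc_last] using measurable_snd
  | cast j =>
    simp only [Fin.snoc_castSucc]
    exact (measurable_pi_apply j).comp measurable_fst

lemma map_comp_fst_compProd {W V : Type*} [MeasurableSpace W] [MeasurableSpace V]
    (μ : Measure W) [SFinite μ] (κ : Kernel W B) [IsMarkovKernel κ]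
    {f : W → V} (hf : Measurable f) : (μ ⊗ₘ κ).map (f ∘ Prod.fst) = μ.map f := by
  rw [← Measure.map_map hf measurable_fst, ← Measure.fst, Measure.fst_compProd]

end MeasureLemmas

theorem _root_.ENNReal.le_of_forall_natCast_add_one_mul_le {a b D : ℝ≥0∞} (hD : D ≠ ⊤)
    (h : ∀ M : ℕ, (M + 1) * a ≤ (M + 1) * b + D) : a ≤ b := by
  refine ENNReal.le_of_forall_pos_le_add fun ε hε _ => ?_
  have hε0 : (ε : ℝ≥0∞) ≠ 0 := by exact_mod_cast hε.ne'
  obtain ⟨M, hM⟩ := ENNReal.exists_nat_gt (ENNReal.div_lt_top hD hε0).ne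
  have hDM : D ≤ (M + 1) * ε :=
    ((ENNReal.div_lt_iff (Or.inl hε0) (Or.inr hD)).1 hM).le.trans (by gcongr; exact le_self_add)
  refine (ENNReal.mul_le_mul_iff_right (a := M + 1) (by positivity) (by simp)).1 ?_
  calc (M + 1) * a ≤ (M + 1) * b + D := h M
    _ ≤ (M + 1) * b + (M + 1) * ε := by gcongr
    _ = (M + 1) * (b + ε) := (mul_add _ _ _).symm

theorem _root_.Finset.sum_sum_perm_pow {ι M : Type*} [Fintype ι] [AddCommMonoid M]
    (σ : Equiv.Perm ι) (f : ι → M) (n : ℕ) :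
    ∑ i, ∑ t : Fin n, f ((σ ^ (t : ℕ)) i) = n • ∑ i, f i := by
  rw [Finset.sum_comm]
  simp only [Equiv.sum_comp, Finset.sum_const, Finset.card_univ, Fintype.card_fin]

section Gluing

variable {A B : Type*} [MeasurableSpace A] [MeasurableSpace B]
  [StandardBorelSpace A] [StandardBorelSpace B] [Nonempty A] [Nonempty B]

/-- From `x`, draw `b ∼ γ(· | x)`, then `a ∼ ρ(· | b)`, and return `(a, b)`. -/
def glueKernel (γ ρ : Measure (A × B)) [IsFiniteMeasure γ] [IsFiniteMeasure ρ] :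
    Kernel A (A × B) :=
  ((ρ.map Prod.swap).condKernel ×ₖ Kernel.id) ∘ₖ γ.condKernel

variable (γ ρ : Measure (A × B)) [IsProbabilityMeasure γ] [IsProbabilityMeasure ρ]

instance : IsMarkovKernel (glueKernel γ ρ) := by
  unfold glueKernel; infer_instance

lemma glueKernel_map_snd : (glueKernel γ ρ).map Prod.snd = γ.condKernel := by
  rw [glueKernel, Kernel.map_comp, ← Kernel.snd_eq, Kernel.snd_prod, Kernel.id_comp]

lemma glueKernel_comp_fst (h : γ.snd = ρ.snd) : glueKernel γ ρ ∘ₘ γ.fst = ρ := by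
  set ν := ρ.map Prod.swap
  have hγ : γ.condKernel ∘ₘ γ.fst = ρ.snd := by
    rw [← Measure.snd_compProd, γ.disintegrate, h]
  calc glueKernel γ ρ ∘ₘ γ.fst
      = (ν.condKernel ×ₖ Kernel.id) ∘ₘ ν.fst := by
        rw [glueKernel, ← Measure.comp_assoc, hγ, Measure.fst_map_swap]
    _ = (ν.fst ⊗ₘ ν.condKernel).map Prod.swap := by
        rw [Measure.compProd_eq_comp_prod, Measure.map_comp _ _ measurable_swap,
          Kernel.map_prod_swap]
    _ = ρ := by
        rw [ν.disintegrate, Measure.map_map measurable_swap measurable_swap]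
        simp

variable {γ ρ} {W : Type*} [MeasurableSpace W] {Q : Measure W} [IsProbabilityMeasure Q]
  {g : W → A} (hg : Measurable g)
include hg

lemma map_snd_compProd_glueKernel (hQ : Q.map g = γ.fst) (h : γ.snd = ρ.snd) :
    (Q ⊗ₘ (glueKernel γ ρ).comap g hg).map Prod.snd = ρ := by
  rw [show (Prod.snd : W × (A × B) → A × B) = Prod.snd ∘ Prod.map g id from rfl,
    ← Measure.map_map measurable_snd (hg.prodMap measurable_id),
    map_prodMap_compProd_comap _ _ hg, ← Measure.snd, Measure.snd_compProd, hQ,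
    glueKernel_comp_fst γ ρ h]

lemma map_edge_compProd_glueKernel (hQ : Q.map g = γ.fst) :
    (Q ⊗ₘ (glueKernel γ ρ).comap g hg).map (fun p => (g p.1, p.2.2)) = γ := by
  rw [show (fun p : W × (A × B) => (g p.1, p.2.2)) = Prod.map id Prod.snd ∘ Prod.map g id
      from rfl,
    ← Measure.map_map (measurable_id.prodMap measurable_snd) (hg.prodMap measurable_id),
    map_prodMap_compProd_comap _ _ hg, ← Measure.compProd_map measurable_snd,
    glueKernel_map_snd, hQ, γ.disintegrate]

end Gluing

section Chain

variable {A B : Type*} [MeasurableSpace A] [MeasurableSpace B]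
  [StandardBorelSpace A] [StandardBorelSpace B] [Nonempty A] [Nonempty B]

def gluedChain (ρ γ : ℕ → ProbabilityMeasure (A × B)) : (n : ℕ) → Measure (Fin (n + 1) → A × B)
  | 0 => (ρ 0 : Measure (A × B)).map fun z _ => z
  | n + 1 =>
      (gluedChain ρ γ n ⊗ₘ (glueKernel (γ n : Measure (A × B)) (ρ (n + 1))).comap
        (fun ω => (ω (Fin.last n)).1) (by fun_prop)).map fun q => Fin.snoc q.1 q.2

variable (ρ γ : ℕ → ProbabilityMeasure (A × B))

instance (n : ℕ) : IsProbabilityMeasure (gluedChain ρ γ n) := by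
  induction n with
  | zero => exact Measure.isProbabilityMeasure_map (by fun_prop)
  | succ n ih => exact Measure.isProbabilityMeasure_map measurable_snoc.aemeasurable

variable {ρ γ}
  (h1 : ∀ j, (γ j : Measure (A × B)).fst = (ρ j : Measure (A × B)).fst)
  (h2 : ∀ j, (γ j : Measure (A × B)).snd = (ρ (j + 1) : Measure (A × B)).snd)
include h1 h2

lemma gluedChain_map_eval (n : ℕ) (i : Fin (n + 1)) :
    (gluedChain ρ γ n).map (fun ω => ω i) = ρ i := by
  induction n with
  | zero =>
    rw [gluedChain, Measure.map_map (by fun_prop) (by fun_prop), Fin.fin_one_eq_zero i]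
    exact Measure.map_id
  | succ n ih =>
    rw [gluedChain, Measure.map_map (measurable_pi_apply i) measurable_snoc]
    induction i using Fin.lastCases with
    | last =>
      simp only [Function.comp_def, Fin.snoc_last, Fin.val_last]
      refine map_snd_compProd_glueKernel _ ?_ (h2 n)
      have hlast := ih (Fin.last n)
      rw [Fin.val_last] at hlast
      rw [h1, ← hlast, Measure.fst, Measure.map_map measurable_fst (measurable_pi_apply _)]
      rfl
    | cast j =>
      simp only [Function.comp_def, Fin.snoc_castSucc, Fin.val_castSucc]
      rw [← ih j]
      exact map_comp_fst_compProd _ _ (f := fun ω : Fin (n + 1) → A × B => ω j)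
        (measurable_pi_apply j)

lemma gluedChain_map_edge (n : ℕ) (j : Fin n) :
    (gluedChain ρ γ n).map (fun ω => ((ω j.castSucc).1, (ω j.succ).2)) = γ j := by
  induction n with
  | zero => exact j.elim0
  | succ n ih =>
    rw [gluedChain, Measure.map_map (by fun_prop) measurable_snoc]
    induction j using Fin.lastCases with
    | last =>
      simp only [Function.comp_def, Fin.succ_last, Fin.snoc_last, Fin.snoc_castSucc, Fin.val_last]
      refine map_edge_compProd_glueKernel (ρ := (ρ (n + 1) : Measure (A × B)))
        (g := fun ω : Fin (n + 1) → A × B => (ω (Fin.last n)).1) _ ?_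
      have hlast := gluedChain_map_eval h1 h2 n (Fin.last n)
      rw [Fin.val_last] at hlast
      rw [h1, ← hlast, Measure.fst, Measure.map_map measurable_fst (measurable_pi_apply _)]
      rfl
    | cast j =>
      simp only [Function.comp_def, Fin.succ_castSucc, Fin.snoc_castSucc, Fin.val_castSucc]
      rw [← ih j]
      exact map_comp_fst_compProd _ _
        (f := fun ω : Fin (n + 1) → A × B => ((ω j.castSucc).1, (ω j.succ).2))
        (by fun_prop)

end Chain

section Marginals

variable {Y1 Y2 : Type*} [MeasurableSpace Y1] [MeasurableSpace Y2]

lemma coe_margFst (π : ProbabilityMeasure (Y1 × Y2)) :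
    (margFst π : Measure Y1) = (π : Measure (Y1 × Y2)).fst :=
  ProbabilityMeasure.toMeasure_map _ _

lemma coe_margSnd (π : ProbabilityMeasure (Y1 × Y2)) :
    (margSnd π : Measure Y2) = (π : Measure (Y1 × Y2)).snd :=
  ProbabilityMeasure.toMeasure_map _ _

lemma mem_coupling_margFst_margSnd (π : ProbabilityMeasure (Y1 × Y2)) :
    π ∈ Coupling (margFst π) (margSnd π) :=
  ⟨(coe_margFst π).symm, (coe_margSnd π).symm⟩

lemma exists_mem_coupling_transportCost_lt {c : Y1 × Y2 → ℝ≥0∞} {μ1 : ProbabilityMeasure Y1}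
    {μ2 : ProbabilityMeasure Y2} {r : ℝ≥0∞} (h : OTCost c μ1 μ2 < r) :
    ∃ π ∈ Coupling μ1 μ2, transportCost c π < r := by
  simpa only [OTCost, iInf_lt_iff, exists_prop] using h

lemma lintegral_margFst {f : Y1 → ℝ≥0∞} (hf : Measurable f) (π : ProbabilityMeasure (Y1 × Y2)) :
    ∫⁻ x, f x ∂(margFst π : Measure Y1) = ∫⁻ p, f p.1 ∂(π : Measure (Y1 × Y2)) := by
  rw [coe_margFst, Measure.fst, lintegral_map hf measurable_fst]

lemma lintegral_margSnd {f : Y2 → ℝ≥0∞} (hf : Measurable f) (π : ProbabilityMeasure (Y1 × Y2)) :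
    ∫⁻ x, f x ∂(margSnd π : Measure Y2) = ∫⁻ p, f p.2 ∂(π : Measure (Y1 × Y2)) := by
  rw [coe_margSnd, Measure.snd, lintegral_map hf measurable_snd]

end Marginals

namespace TotallyCCyclMono

variable {c : X1 × X2 → ℝ≥0∞} {a1 : X1 → ℝ≥0∞} {a2 : X2 → ℝ≥0∞}
  {F : Set (ProbabilityMeasure (X1 × X2))}

theorem sum_transportCost_le_gluedChain (hmono : TotallyCCyclMono c F) (hc : Measurable c)
    (ha1 : Measurable a1) (ha2 : Measurable a2) (hdom : ∀ x1 x2, c (x1, x2) ≤ a1 x1 + a2 x2)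
    {ρ γ : ℕ → ProbabilityMeasure (X1 × X2)} (hρ : ∀ j, ρ j ∈ F)
    (h1 : ∀ j, (γ j : Measure (X1 × X2)).fst = (ρ j : Measure (X1 × X2)).fst)
    (h2 : ∀ j, (γ j : Measure (X1 × X2)).snd = (ρ (j + 1) : Measure (X1 × X2)).snd) (M : ℕ) :
    ∑ t : Fin (M + 1), transportCost c (ρ t) ≤ ∑ j : Fin M, transportCost c (γ j) +
      (∫⁻ x, a1 x ∂(margFst (ρ M) : Measure X1) + ∫⁻ x, a2 x ∂(margSnd (ρ 0) : Measure X2)) := by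
  obtain ⟨x⟩ := (ρ 0).nonempty
  have : Nonempty X1 := ⟨x.1⟩
  have : Nonempty X2 := ⟨x.2⟩
  let θ : Measure (Fin (M + 1) → X1 × X2) := gluedChain ρ γ M
  have hθ : ∀ {f : X1 × X2 → ℝ≥0∞}, Measurable f → ∀ t : Fin (M + 1),
      ∫⁻ ω, f (ω t) ∂θ = ∫⁻ z, f z ∂(ρ t : Measure (X1 × X2)) := fun hf t => by
    rw [← gluedChain_map_eval h1 h2 M t, lintegral_map hf (measurable_pi_apply t)]
  have hθF : ∀ t, ProbabilityMeasure.map ⟨θ, inferInstance⟩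
      (measurable_pi_apply t).aemeasurable ∈ F := fun t => by
    convert hρ t
    exact ProbabilityMeasure.toMeasure_injective
      ((ProbabilityMeasure.toMeasure_map _ _).trans (gluedChain_map_eval h1 h2 M t))
  have hedge : ∀ j : Fin M, ∫⁻ ω, c ((ω j.castSucc).1, (ω j.succ).2) ∂θ
      = transportCost c (γ j) := fun j => by
    rw [transportCost, ← gluedChain_map_edge h1 h2 M j, lintegral_map hc (by fun_prop)]
  have hwrap : ∫⁻ ω, c ((ω (Fin.last M)).1, (ω 0).2) ∂θ
      ≤ ∫⁻ x, a1 x ∂(margFst (ρ M) : Measure X1) + ∫⁻ x, a2 x ∂(margSnd (ρ 0) : Measure X2) :=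
    calc _ ≤ ∫⁻ ω, a1 (ω (Fin.last M)).1 + a2 (ω 0).2 ∂θ :=
          lintegral_mono fun ω => hdom _ _
      _ = _ := by
          rw [lintegral_add_left (by fun_prop), hθ (f := fun z => a1 z.1) (by fun_prop),
            hθ (f := fun z => a2 z.2) (by fun_prop), lintegral_margFst ha1,
            lintegral_margSnd ha2, Fin.val_last, Fin.val_zero]
  calc ∑ t : Fin (M + 1), transportCost c (ρ t)
      = ∫⁻ ω, ∑ t, c (ω t) ∂θ := by
        rw [lintegral_finsetSum _ fun t _ => by fun_prop]
        exact Finset.sum_congr rfl fun t _ => (hθ hc t).symm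
    _ ≤ ∫⁻ ω, ∑ t, c ((ω t).1, (ω (finRotate (M + 1) t)).2) ∂θ :=
        hmono (M + 1) M.succ_pos _ hθF (finRotate (M + 1))
    _ = ∑ j : Fin M, ∫⁻ ω, c ((ω j.castSucc).1, (ω j.succ).2) ∂θ
          + ∫⁻ ω, c ((ω (Fin.last M)).1, (ω 0).2) ∂θ := by
        rw [lintegral_finsetSum _ fun t _ => by fun_prop, Fin.sum_univ_castSucc]
        have hrot (j : Fin M) : finRotate (M + 1) j.castSucc = j.succ := finRotate_of_lt j.isLt
        simp only [finRotate_last, hrot]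
    _ ≤ _ := add_le_add (Finset.sum_le_sum fun j _ => (hedge j).le) hwrap

theorem sum_transportCost_le {ι : Type*} [Fintype ι] (hmono : TotallyCCyclMono c F)
    (hc : Measurable c) (ha1 : Measurable a1) (ha2 : Measurable a2)
    (hdom : ∀ x1 x2, c (x1, x2) ≤ a1 x1 + a2 x2) (hF : F ⊆ PaPair a1 a2)
    {π : ι → ProbabilityMeasure (X1 × X2)} (hπ : ∀ i, π i ∈ F) (σ : Equiv.Perm ι)
    {β : ι → ProbabilityMeasure (X1 × X2)}
    (hβ : ∀ i, β i ∈ Coupling (margFst (π i)) (margSnd (π (σ i)))) :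
    ∑ i, transportCost c (π i) ≤ ∑ i, transportCost c (β i) := by
  set A1 := fun i => ∫⁻ x, a1 x ∂(margFst (π i) : Measure X1)
  set A2 := fun i => ∫⁻ x, a2 x ∂(margSnd (π i) : Measure X2)
  have hS : ∑ i, A1 i + ∑ i, A2 i ≠ ⊤ := ENNReal.add_ne_top.2
    ⟨ENNReal.sum_ne_top.2 fun i _ => (hF (hπ i)).1, ENNReal.sum_ne_top.2 fun i _ => (hF (hπ i)).2⟩
  refine ENNReal.le_of_forall_natCast_add_one_mul_le hS fun M => ?_
  have hchain (i : ι) := hmono.sum_transportCost_le_gluedChain hc ha1 ha2 hdom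
    (ρ := fun t => π ((σ ^ t) i)) (γ := fun t => β ((σ ^ t) i)) (fun t => hπ _)
    (fun t => (hβ _).1.trans (coe_margFst _))
    (fun t => by rw [pow_succ', Equiv.Perm.mul_apply]; exact (hβ _).2.trans (coe_margSnd _)) M
  calc (M + 1) * ∑ i, transportCost c (π i)
      = ∑ i, ∑ t : Fin (M + 1), transportCost c (π ((σ ^ (t : ℕ)) i)) := by
        rw [Finset.sum_sum_perm_pow σ (fun i => transportCost c (π i)), nsmul_eq_mul,
          Nat.cast_succ]
    _ ≤ ∑ i, (∑ j : Fin M, transportCost c (β ((σ ^ (j : ℕ)) i)) + (A1 ((σ ^ M) i) + A2 i)) :=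
        Finset.sum_le_sum fun i _ => by
          simpa only [pow_zero, Equiv.Perm.one_apply] using hchain i
    _ = M * ∑ i, transportCost c (β i) + (∑ i, A1 i + ∑ i, A2 i) := by
        rw [Finset.sum_add_distrib, Finset.sum_add_distrib,
          Finset.sum_sum_perm_pow σ (fun i => transportCost c (β i)), nsmul_eq_mul,
          Equiv.sum_comp (σ ^ M) A1]
    _ ≤ (M + 1) * ∑ i, transportCost c (β i) + (∑ i, A1 i + ∑ i, A2 i) := by
        gcongr; exact le_self_add

end TotallyCCyclMono

/-- Proposition 3.7, claim 2: if `F ⊆ P_{a1⊕a2}(X1 × X2)` is totally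
`C`-cyclically monotone, then the set of its marginal pairs is `C`-cyclically monotone. -/
theorem totallyCCyclMono_marginals_cyclMono
    (c : X1 × X2 → ℝ≥0∞) (hc : LowerSemicontinuous c)
    (a1 : X1 → ℝ≥0∞) (a2 : X2 → ℝ≥0∞) (ha1 : Measurable a1) (ha2 : Measurable a2)
    (hdom : ∀ x1 x2, c (x1, x2) ≤ a1 x1 + a2 x2)
    (F : Set (ProbabilityMeasure (X1 × X2))) (hF : F ⊆ PaPair a1 a2)
    (hmono : TotallyCCyclMono c F) :
    KCyclMono (OTCost c) ((fun π => (margFst π, margSnd π)) '' F) := by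
  intro k _ f hf σ
  choose π hπF hπf using hf
  obtain rfl : f = fun i => (margFst (π i), margSnd (π i)) := funext fun i => (hπf i).symm
  refine ENNReal.le_of_forall_pos_le_add fun ε hε hR => ?_
  have hnear (i : Fin k) : ∃ β ∈ Coupling (margFst (π i)) (margSnd (π (σ i))),
      transportCost c β < OTCost c (margFst (π i)) (margSnd (π (σ i))) + ε / k :=
    exists_mem_coupling_transportCost_lt <| ENNReal.lt_add_right
      (ENNReal.sum_lt_top.1 hR i (Finset.mem_univ i)).ne
      (ENNReal.div_pos (by exact_mod_cast hε.ne') (ENNReal.natCast_ne_top k)).ne'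
  choose β hβ hβc using hnear
  calc ∑ i, OTCost c (margFst (π i)) (margSnd (π i))
      ≤ ∑ i, transportCost c (π i) :=
        Finset.sum_le_sum fun i _ => iInf₂_le _ (mem_coupling_margFst_margSnd (π i))
    _ ≤ ∑ i, transportCost c (β i) :=
        hmono.sum_transportCost_le hc.measurable ha1 ha2 hdom hF hπF σ hβ
    _ ≤ ∑ i, (OTCost c (margFst (π i)) (margSnd (π (σ i))) + ε / k) :=
        Finset.sum_le_sum fun i _ => (hβc i).le
    _ ≤ _ := by
        rw [Finset.sum_add_distrib, Finset.sum_const, Finset.card_fin, nsmul_eq_mul]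
        gcongr
        exact ENNReal.mul_div_le

end OTRM
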